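/- arXiv:1704.05598 — 2 statements merged into one kernel-verified Lean document; each statement's English description precedes it below -/
import Mathlib

section
/- Let n ≥ 2, let G : ℝⁿ → ℝ be bounded and continuous, and let η ∈ C_c^∞(ℝⁿ;ℝ). Writing points of ℝⁿ as x = (x', x_n) with x' ∈ ℝ^{n−1}, one has lim_{λ → 0⁺} λ^{−(n+1)/2} ∫_{ℝ^{n−1}} ∫_0^∞ η(x/λ^{1/2})² e^{−2 x_n/λ} G(x) dx_n dx' = (G(0)/2) ∫_{ℝ^{n−1}} η(y', 0)² dy'. -/
open MeasureTheory Filter Topology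

/-- Boundary concentration limit: for `G` bounded continuous and `η ∈ C_c^∞` on
`ℝⁿ = ℝ^{n-1} × ℝ` (with `n = d + 1 ≥ 2`),
`λ^{-(n+1)/2} ∫_{x_n>0} η(x/√λ)² e^{-2x_n/λ} G(x) dx → (G(0)/2) ∫ η(y',0)² dy'`
as `λ → 0⁺`. -/
theorem boundary_concentration_limit
    (d : ℕ) (hd : 1 ≤ d)
    (G : EuclideanSpace ℝ (Fin d) × ℝ → ℝ)
    (hG_cont : Continuous G) (B : ℝ) (hG_bdd : ∀ x, |G x| ≤ B)
    (η : EuclideanSpace ℝ (Fin d) × ℝ → ℝ)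
    (hη_smooth : ContDiff ℝ (⊤ : ℕ∞) η) (hη_supp : HasCompactSupport η) :
    Tendsto
      (fun lam : ℝ => lam ^ (-((d : ℝ) + 2) / 2) *
        ∫ x' : EuclideanSpace ℝ (Fin d),
          ∫ xn in Set.Ioi (0 : ℝ),
            (η (lam ^ (-(1 : ℝ) / 2) • (x', xn))) ^ 2 *
              Real.exp (-2 * xn / lam) * G (x', xn))
      (𝓝[>] (0 : ℝ))
      (𝓝 ((G (0, 0) / 2) *
        ∫ y' : EuclideanSpace ℝ (Fin d), (η (y', 0)) ^ 2)) := by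
  classical
  have hηc : Continuous η := hη_smooth.continuous
  -- bound for η
  obtain ⟨M, hM⟩ := hη_supp.exists_bound_of_continuous hηc
  have hM0 : 0 ≤ M := le_trans (norm_nonneg _) (hM (0, 0))
  have hB0 : 0 ≤ B := le_trans (abs_nonneg _) (hG_bdd (0, 0))
  -- compact set containing the first coordinates of the support of η
  set K : Set (EuclideanSpace ℝ (Fin d)) := Prod.fst '' tsupport η with hK_def
  have hK : IsCompact K := hη_supp.image continuous_fst
  have hKmeas : MeasurableSet K := hK.isClosed.measurableSet
  -- the rescaled integrand
  set H : ℝ → (EuclideanSpace ℝ (Fin d) × ℝ) → ℝ := fun lam z =>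
    η (z.1, Real.sqrt lam * z.2) ^ 2 * Real.exp (-2 * z.2) *
      G (Real.sqrt lam • z.1, lam * z.2) with hH_def
  set μ : Measure (EuclideanSpace ℝ (Fin d) × ℝ) :=
    (volume : Measure (EuclideanSpace ℝ (Fin d))).prod
      ((volume : Measure ℝ).restrict (Set.Ioi 0)) with hμ_def
  have hHcont : ∀ lam : ℝ, Continuous (H lam) := by
    intro lam
    apply Continuous.mul
    apply Continuous.mul
    · exact (hηc.comp (continuous_fst.prodMk (continuous_const.mul continuous_snd))).pow 2
    · exact Real.continuous_exp.comp (continuous_const.mul continuous_snd)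
    · exact hG_cont.comp (by fun_prop)
  -- dominating function
  set bound : (EuclideanSpace ℝ (Fin d) × ℝ) → ℝ := fun z =>
    (M ^ 2 * B) * K.indicator (fun _ => (1 : ℝ)) z.1 * Real.exp (-2 * z.2) with hbound_def
  have hbound_int : Integrable bound μ := by
    have h1 : Integrable (fun y' : EuclideanSpace ℝ (Fin d) =>
        (M ^ 2 * B) * K.indicator (fun _ => (1 : ℝ)) y') volume := by
      refine Integrable.const_mul ?_ _
      rw [integrable_indicator_iff hKmeas]
      exact integrableOn_const hK.measure_lt_top.ne
    have h2 : Integrable (fun t : ℝ => Real.exp (-2 * t)) ((volume : Measure ℝ).restrict (Set.Ioi 0)) :=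
      exp_neg_integrableOn_Ioi 0 two_pos
    exact h1.mul_prod h2
  have hbound : ∀ (lam : ℝ) (z : EuclideanSpace ℝ (Fin d) × ℝ), ‖H lam z‖ ≤ bound z := by
    intro lam z
    by_cases hz : z.1 ∈ K
    · have hind : K.indicator (fun _ => (1 : ℝ)) z.1 = 1 := Set.indicator_of_mem hz _
      have : ‖H lam z‖ = |η (z.1, Real.sqrt lam * z.2)| ^ 2 * Real.exp (-2 * z.2) *
          |G (Real.sqrt lam • z.1, lam * z.2)| := by
        rw [hH_def]
        simp only [Real.norm_eq_abs, abs_mul, abs_pow, abs_of_pos (Real.exp_pos _)]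
      rw [this, hbound_def]
      simp only [hind, mul_one]
      have h1 : |η (z.1, Real.sqrt lam * z.2)| ^ 2 ≤ M ^ 2 := by
        have := hM (z.1, Real.sqrt lam * z.2)
        rw [Real.norm_eq_abs] at this
        exact pow_le_pow_left₀ (abs_nonneg _) this 2
      have h2 : |G (Real.sqrt lam • z.1, lam * z.2)| ≤ B := hG_bdd _
      calc |η (z.1, Real.sqrt lam * z.2)| ^ 2 * Real.exp (-2 * z.2) *
            |G (Real.sqrt lam • z.1, lam * z.2)|
          ≤ M ^ 2 * Real.exp (-2 * z.2) * B := by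
            apply mul_le_mul
            · exact mul_le_mul_of_nonneg_right h1 (Real.exp_pos _).le
            · exact h2
            · exact abs_nonneg _
            · positivity
        _ = M ^ 2 * B * Real.exp (-2 * z.2) := by ring
    · have hη0 : η (z.1, Real.sqrt lam * z.2) = 0 := by
        by_contra h
        exact hz ⟨(z.1, Real.sqrt lam * z.2), subset_tsupport η h, rfl⟩
      have hind : K.indicator (fun _ => (1 : ℝ)) z.1 = 0 := Set.indicator_of_notMem hz _
      rw [hH_def, hbound_def]
      simp [hη0, hind]
  have hHint : ∀ lam : ℝ, Integrable (H lam) μ := fun lam =>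
    hbound_int.mono' (hHcont lam).aestronglyMeasurable (ae_of_all _ (hbound lam))
  -- the pointwise limit
  have hsqrt : Tendsto (fun lam : ℝ => Real.sqrt lam) (𝓝[>] 0) (𝓝 0) := by
    have := (Real.continuous_sqrt.tendsto 0).mono_left (nhdsWithin_le_nhds (s := Set.Ioi (0:ℝ)))
    simpa using this
  have hid : Tendsto (fun lam : ℝ => lam) (𝓝[>] 0) (𝓝 0) :=
    tendsto_id.mono_left nhdsWithin_le_nhds
  have hlim : ∀ z : EuclideanSpace ℝ (Fin d) × ℝ,
      Tendsto (fun lam => H lam z) (𝓝[>] 0)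
        (𝓝 (η (z.1, 0) ^ 2 * Real.exp (-2 * z.2) * G (0, 0))) := by
    intro z
    have t1 : Tendsto (fun lam : ℝ => ((z.1, Real.sqrt lam * z.2) :
        EuclideanSpace ℝ (Fin d) × ℝ)) (𝓝[>] 0) (𝓝 (z.1, 0)) := by
      apply Tendsto.prodMk_nhds tendsto_const_nhds
      simpa using hsqrt.mul_const z.2
    have t2 : Tendsto (fun lam : ℝ => ((Real.sqrt lam • z.1, lam * z.2) :
        EuclideanSpace ℝ (Fin d) × ℝ)) (𝓝[>] 0) (𝓝 (0, 0)) := by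
      apply Tendsto.prodMk_nhds
      · simpa using hsqrt.smul_const z.1
      · simpa using hid.mul_const z.2
    exact (((hηc.tendsto _).comp t1).pow 2).mul tendsto_const_nhds |>.mul
      ((hG_cont.tendsto _).comp t2)
  -- dominated convergence
  have key : Tendsto (fun lam : ℝ => ∫ z, H lam z ∂μ) (𝓝[>] 0)
      (𝓝 (∫ z, η (z.1, 0) ^ 2 * Real.exp (-2 * z.2) * G (0, 0) ∂μ)) := by
    apply tendsto_integral_filter_of_dominated_convergence bound
    · exact Eventually.of_forall fun lam => (hHcont lam).aestronglyMeasurable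
    · exact Eventually.of_forall fun lam => ae_of_all _ (hbound lam)
    · exact hbound_int
    · exact ae_of_all _ hlim
  -- compute the limit integral
  have hexp_half : (∫ t in Set.Ioi (0 : ℝ), Real.exp (-2 * t)) = 1 / 2 := by
    have h := integral_comp_mul_left_Ioi (fun x => Real.exp (-x)) 0 two_pos
    simp only [mul_zero, smul_eq_mul, integral_exp_neg_Ioi, neg_zero, Real.exp_zero,
      mul_one] at h
    have : (fun t : ℝ => Real.exp (-2 * t)) = fun t : ℝ => Real.exp (-(2 * t)) := by
      funext t; ring_nf
    rw [this, h]
    norm_num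
  have hval : (∫ z, η (z.1, 0) ^ 2 * Real.exp (-2 * z.2) * G (0, 0) ∂μ)
      = (G (0, 0) / 2) * ∫ y' : EuclideanSpace ℝ (Fin d), (η (y', 0)) ^ 2 := by
    have : (fun z : EuclideanSpace ℝ (Fin d) × ℝ =>
        η (z.1, 0) ^ 2 * Real.exp (-2 * z.2) * G (0, 0))
        = fun z : EuclideanSpace ℝ (Fin d) × ℝ =>
          (fun y' => η (y', 0) ^ 2) z.1 * (fun t => Real.exp (-2 * t) * G (0, 0)) z.2 := by
      funext z; ring
    rw [hμ_def, this, integral_prod_mul (fun y' => η (y', 0) ^ 2)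
      (fun t => Real.exp (-2 * t) * G (0, 0)), integral_mul_const, hexp_half]
    ring
  rw [hval] at key
  -- reduce the original expression to the rescaled one
  apply Tendsto.congr' _ key
  filter_upwards [self_mem_nhdsWithin] with lam hlam
  have hlam : (0 : ℝ) < lam := hlam
  set s : ℝ := Real.sqrt lam with hs_def
  have hs : 0 < s := Real.sqrt_pos.2 hlam
  have hss : s * s = lam := Real.mul_self_sqrt hlam.le
  -- rewrite the rpow factors
  have hpow1 : lam ^ (-(1 : ℝ) / 2) = s⁻¹ := by
    rw [hs_def, Real.sqrt_eq_rpow, neg_div, ← Real.rpow_neg hlam.le]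
  have hpow2 : lam ^ (-((d : ℝ) + 2) / 2) = (s ^ (d + 2))⁻¹ := by
    rw [hs_def, Real.sqrt_eq_rpow, ← Real.rpow_natCast (lam ^ ((1:ℝ)/2)) (d + 2),
      ← Real.rpow_mul hlam.le, ← Real.rpow_neg hlam.le]
    congr 1
    push_cast
    ring
  -- change of variables in the inner integral
  have inner_eq : ∀ x' : EuclideanSpace ℝ (Fin d),
      (∫ xn in Set.Ioi (0 : ℝ), η (s⁻¹ • ((x', xn) : EuclideanSpace ℝ (Fin d) × ℝ)) ^ 2 *
          Real.exp (-2 * xn / lam) * G (x', xn))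
      = lam * ∫ t in Set.Ioi (0 : ℝ),
          η (s⁻¹ • ((x', lam * t) : EuclideanSpace ℝ (Fin d) × ℝ)) ^ 2 *
            Real.exp (-2 * (lam * t) / lam) * G (x', lam * t) := by
    intro x'
    have h := integral_comp_mul_left_Ioi (fun xn =>
      η (s⁻¹ • ((x', xn) : EuclideanSpace ℝ (Fin d) × ℝ)) ^ 2 *
        Real.exp (-2 * xn / lam) * G (x', xn)) 0 hlam
    simp only [mul_zero, smul_eq_mul] at h
    rw [h, ← mul_assoc, mul_inv_cancel₀ hlam.ne', one_mul]
  -- change of variables in the outer integral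
  have houter := MeasureTheory.Measure.integral_comp_smul_of_nonneg
    (volume : Measure (EuclideanSpace ℝ (Fin d)))
    (fun x' : EuclideanSpace ℝ (Fin d) =>
      ∫ xn in Set.Ioi (0 : ℝ), η (s⁻¹ • ((x', xn) : EuclideanSpace ℝ (Fin d) × ℝ)) ^ 2 *
        Real.exp (-2 * xn / lam) * G (x', xn)) s (hR := hs.le)
  simp only [finrank_euclideanSpace_fin, smul_eq_mul] at houter
  -- simplify the integrand after substitution
  have harg : ∀ (y : EuclideanSpace ℝ (Fin d)) (t : ℝ),
      s⁻¹ • ((s • y, lam * t) : EuclideanSpace ℝ (Fin d) × ℝ) = (y, s * t) := by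
    intro y t
    have h1 : s⁻¹ • (s • y) = y := by
      rw [smul_smul, inv_mul_cancel₀ hs.ne', one_smul]
    have h2 : s⁻¹ * (lam * t) = s * t := by
      rw [← hss]; field_simp
    rw [Prod.smul_mk, smul_eq_mul, h1, h2]
  have hexp : ∀ t : ℝ, -2 * (lam * t) / lam = -2 * t := by
    intro t; field_simp
  -- put everything together
  simp only [hpow1, hpow2]
  rw [show (∫ x' : EuclideanSpace ℝ (Fin d),
      ∫ xn in Set.Ioi (0 : ℝ), η (s⁻¹ • ((x', xn) : EuclideanSpace ℝ (Fin d) × ℝ)) ^ 2 *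
        Real.exp (-2 * xn / lam) * G (x', xn))
      = s ^ d * ∫ y : EuclideanSpace ℝ (Fin d),
          ∫ xn in Set.Ioi (0 : ℝ), η (s⁻¹ • ((s • y, xn) : EuclideanSpace ℝ (Fin d) × ℝ)) ^ 2 *
            Real.exp (-2 * xn / lam) * G (s • y, xn) from by
    rw [houter, ← mul_assoc, mul_inv_cancel₀ (pow_ne_zero _ hs.ne'), one_mul]]
  simp only [inner_eq, harg, hexp]
  rw [MeasureTheory.integral_const_mul lam]
  have hiter : (∫ y : EuclideanSpace ℝ (Fin d), ∫ t in Set.Ioi (0 : ℝ),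
      η (y, s * t) ^ 2 * Real.exp (-2 * t) * G (s • y, lam * t))
      = ∫ z, H lam z ∂μ := by
    rw [hμ_def]
    exact MeasureTheory.integral_integral (hHint lam)
  rw [hiter]
  rw [← hss]
  have : ((s * s) ^ (d + 2)) = 0 → False := by
    intro h; exact (pow_ne_zero _ (mul_ne_zero hs.ne' hs.ne')) h
  field_simp
  ring
end

section
/- Let f : ℝ → ℂ be integrable with compact support, and suppose there exists δ > 0 such that the Fourier transform 𝓕f(λ) = ∫_ℝ e^{−i λ x} f(x) dx vanishes for all real λ with |λ| < δ. Then f = 0 almost everywhere. -/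
/-!
Since `f` has compact support, `z ↦ ∫ e^{-izx} f(x) dx` is an entire function of `z ∈ ℂ`.
It vanishes on the real interval `(-δ, δ)`, so by the identity theorem it vanishes everywhere,
in particular the Fourier transform of `f` is identically zero. Every test function `g` is the
Fourier transform of a Schwartz function `φ`, so `∫ g f = ∫ φ 𝓕f = 0`, hence `f = 0` almost
everywhere.
-/

open MeasureTheory Filter Topology Complex
open scoped ContDiff FourierTransform

section FourierInjective

variable {V F : Type*} [NormedAddCommGroup V] [InnerProductSpace ℝ V] [FiniteDimensional ℝ V]
  [MeasurableSpace V] [BorelSpace V] [NormedAddCommGroup F] [NormedSpace ℂ F] [CompleteSpace F]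

open SchwartzMap in
theorem MeasureTheory.Integrable.ae_eq_zero_of_fourier_eq_zero {f : V → F} (hf : Integrable f)
    (h : 𝓕 f = 0) : ∀ᵐ x, f x = 0 := by
  refine ae_eq_zero_of_integral_contDiff_smul_eq_zero hf.locallyIntegrable fun g g_smooth g_cpt ↦ ?_
  have hg₁ : HasCompactSupport (ofRealCLM ∘ g) := g_cpt.comp_left rfl
  have hg₂ : ContDiff ℝ ∞ (ofRealCLM ∘ g) := by fun_prop
  set φ : 𝓢(V, ℂ) := 𝓕⁻ (hg₁.toSchwartzMap hg₂)
  have hφ : 𝓕 (φ : V → ℂ) = ofRealCLM ∘ g := by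
    rw [← fourier_coe, FourierInvPair.fourier_fourierInv_eq]
    rfl
  calc ∫ x, g x • f x = ∫ x, 𝓕 (φ : V → ℂ) x • f x := by simp [hφ]
    _ = ∫ x, φ x • 𝓕 f x := by
      simpa using! VectorFourier.integral_fourierIntegral_smul_eq_flip (L := innerₗ V)
        Real.continuous_fourierChar continuous_inner (φ.integrable (μ := volume)) hf
    _ = 0 := by simp [h]

end FourierInjective

section FourierLaplace

variable {E : Type*} [NormedAddCommGroup E] [NormedSpace ℂ E]

noncomputable def fourierLaplace (f : ℝ → E) (z : ℂ) : E :=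
  ∫ x : ℝ, cexp (-(I * z * x)) • f x

theorem Real.fourier_eq_fourierLaplace (f : ℝ → E) (w : ℝ) :
    𝓕 f w = fourierLaplace f (2 * Real.pi * w) := by
  rw [Real.fourier_real_eq_integral_exp_smul, fourierLaplace]
  congr with x
  push_cast
  ring_nf

lemma norm_cexp_neg_I_mul_le {z : ℂ} {x R b : ℝ} (hx : |x| ≤ R) (hz : |z.im| ≤ b) :
    ‖cexp (-(I * z * x))‖ ≤ Real.exp (R * b) := by
  have hre : (-(I * z * x)).re = x * z.im := by simp; ring
  rw [norm_exp, Real.exp_le_exp, hre]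
  calc x * z.im ≤ |x| * |z.im| := by rw [← abs_mul]; exact le_abs_self _
    _ ≤ R * b := mul_le_mul hx hz (abs_nonneg _) ((abs_nonneg _).trans hx)

lemma norm_cexp_neg_I_mul_smul_le {f : ℝ → E} {R b : ℝ} (hfR : ∀ x, f x ≠ 0 → |x| ≤ R) {z : ℂ}
    (hz : |z.im| ≤ b) (x : ℝ) :
    ‖cexp (-(I * z * x)) • f x‖ ≤ Real.exp (R * b) * ‖f x‖ := by
  rcases eq_or_ne (f x) 0 with hfx | hfx
  · simp [hfx]
  · rw [norm_smul]
    gcongr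
    exact norm_cexp_neg_I_mul_le (hfR x hfx) hz

lemma Complex.abs_im_le_of_mem_ball {z z₀ : ℂ} {r : ℝ} (hz : z ∈ Metric.ball z₀ r) :
    |z.im| ≤ |z₀.im| + r := by
  have h₁ : |z.im - z₀.im| ≤ ‖z - z₀‖ := by simpa using abs_im_le_norm (z - z₀)
  have h₂ := abs_sub_abs_le_abs_sub z.im z₀.im
  rw [Metric.mem_ball, dist_eq_norm] at hz
  linarith

/-- Differentiation under the integral sign: on `ball z₀ 1` the integrand and its `z`-derivative
`-(I x) • e^{-izx} f(x)` are dominated by multiples of `‖f‖`, because `|x|` stays bounded on the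
support of `f`. -/
theorem differentiable_fourierLaplace {f : ℝ → E} (hf : Integrable f)
    (hsupp : HasCompactSupport f) : Differentiable ℂ (fourierLaplace f) := by
  obtain ⟨R, hR⟩ := hsupp.isCompact.isBounded.subset_closedBall 0
  have hfR : ∀ x, f x ≠ 0 → |x| ≤ R := fun x hx ↦ by simpa using hR (subset_tsupport f hx)
  intro z₀
  set b := |z₀.im| + 1
  have hmeas (z : ℂ) : AEStronglyMeasurable (fun x : ℝ ↦ cexp (-(I * z * x)) • f x) :=
    (by fun_prop : Continuous fun x : ℝ ↦ cexp (-(I * z * x))).aestronglyMeasurable.smul hf.1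
  have hderiv (x : ℝ) (z : ℂ) : HasDerivAt (fun z : ℂ ↦ cexp (-(I * z * x)) • f x)
      ((-(I * x)) • cexp (-(I * z * x)) • f x) z := by
    simpa [smul_smul, mul_comm] using
      ((((hasDerivAt_id z).const_mul I).mul_const (x : ℂ)).neg.cexp).smul_const (f x)
  refine (hasDerivAt_integral_of_dominated_loc_of_deriv_le (Metric.ball_mem_nhds z₀ one_pos)
    (Eventually.of_forall hmeas) ?_ ?_ ?_ (hf.norm.const_mul (R * Real.exp (R * b)))
    (ae_of_all _ fun x z _ ↦ hderiv x z)).2.differentiableAt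
  · exact (hf.norm.const_mul (Real.exp (R * b))).mono' (hmeas z₀)
      (ae_of_all _ (norm_cexp_neg_I_mul_smul_le hfR (by simp [b])))
  · exact (by fun_prop : Continuous fun x : ℝ ↦ -(I * x)).aestronglyMeasurable.smul (hmeas z₀)
  · refine ae_of_all _ fun x z hz ↦ ?_
    rcases eq_or_ne (f x) 0 with hfx | hfx
    · simp [hfx]
    have hxR := hfR x hfx
    rw [norm_smul, mul_assoc R]
    exact mul_le_mul (by simpa using hxR)
      (norm_cexp_neg_I_mul_smul_le hfR (abs_im_le_of_mem_ball hz) x)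
      (norm_nonneg _) ((abs_nonneg x).trans hxR)

end FourierLaplace

theorem Differentiable.eq_zero_of_eventually_ofReal_eq_zero {E : Type*} [NormedAddCommGroup E]
    [NormedSpace ℂ E] [CompleteSpace E] {g : ℂ → E} (hg : Differentiable ℂ g)
    (h : ∀ᶠ t : ℝ in 𝓝 0, g t = 0) : g = 0 := by
  have hofReal : Tendsto ((↑) : ℝ → ℂ) (𝓝[≠] 0) (𝓝[≠] 0) :=
    continuous_ofReal.continuousWithinAt.tendsto_nhdsWithin fun _ _ ↦ by simp_all
  have hfreq : ∃ᶠ z in 𝓝[≠] (0 : ℂ), g z = 0 :=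
    hofReal.frequently (h.filter_mono nhdsWithin_le_nhds).frequently
  funext z
  exact (hg.differentiableOn.analyticOnNhd isOpen_univ)
    |>.eqOn_zero_of_preconnected_of_frequently_eq_zero isPreconnected_univ (Set.mem_univ 0) hfreq
    (Set.mem_univ z)

/-- An integrable, compactly supported function on `ℝ` whose Fourier transform
vanishes on a neighborhood `(-δ, δ)` of `0` vanishes almost everywhere. -/
theorem compactly_supported_fourier_vanishing_near_zero
    (f : ℝ → ℂ) (hf_int : Integrable f) (hf_supp : HasCompactSupport f)
    (δ : ℝ) (hδ : 0 < δ)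
    (hvanish : ∀ lam : ℝ, |lam| < δ →
      (∫ x : ℝ, Complex.exp (-(Complex.I * (lam : ℂ) * (x : ℂ))) * f x) = 0) :
    ∀ᵐ x : ℝ, f x = 0 := by
  have hnear : ∀ᶠ t : ℝ in 𝓝 0, fourierLaplace f t = 0 := by
    filter_upwards [Metric.ball_mem_nhds 0 hδ] with t ht
    simpa [fourierLaplace] using hvanish t (by simpa using ht)
  have hzero := (differentiable_fourierLaplace hf_int hf_supp).eq_zero_of_eventually_ofReal_eq_zero
    hnear
  refine hf_int.ae_eq_zero_of_fourier_eq_zero (funext fun w ↦ ?_)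
  rw [Real.fourier_eq_fourierLaplace, hzero, Pi.zero_apply, Pi.zero_apply]
end
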